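/- arXiv:2212.14860 — 3 statements merged into one kernel-verified Lean document; each statement's English description precedes it below -/
import Mathlib

section
/- For every n ≥ 2 there is a 2-colouring of the edges of the complete graph on 9n−4 vertices with colours red and blue containing no monochromatic copy of P_{3n}^2 (and hence no monochromatic copy of C_{3n}^2). Explicitly, one may take disjoint sets X_1,X_2,Y_1,Y_2 of size 2n−1, a set Z of size n−1 and one extra vertex z; colour all edges inside X_1 and inside X_2 blue, all edges inside Y_1 and inside Y_2 red, all edges in (X_1,X_2), (X_1,Z), (X_2,Z), (X_1,Y_2), (X_2,Y_1) red, all edges in (Y_1,Y_2), (Y_1,Z), (Y_2,Z), (X_1,Y_1), (X_2,Y_2) blue, all edges from z to X_1∪X_2 blue and from z to Y_1∪Y_2 red, and colour the edges inside Z∪{z} arbitrarily. -/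
/-!
Common definitions.  Colour convention for 2-edge-colourings `c : Sym2 V → Bool`:
`true` = red, `false` = blue.  For 3-colourings by `Fin 3`: `0` = red, `1` = blue,
`2` = purple.
-/

/-- The square of the path on `k` vertices: `i` and `j` are adjacent iff `1 ≤ |i - j| ≤ 2`. -/
def pathSq (k : ℕ) : SimpleGraph (Fin k) where
  Adj i j := i ≠ j ∧ i.val ≤ j.val + 2 ∧ j.val ≤ i.val + 2
  symm := by
    constructor
    rintro i j ⟨h1, h2, h3⟩
    exact ⟨h1.symm, h3, h2⟩
  loopless := by
    constructor
    rintro i ⟨h, -⟩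
    exact h rfl

/-- The square of the cycle on `k` vertices: vertices at (cyclic) distance `1` or `2`
are adjacent. -/
def cycleSq (k : ℕ) : SimpleGraph (ZMod k) where
  Adj i j := i ≠ j ∧ (j = i + 1 ∨ j = i + 2 ∨ i = j + 1 ∨ i = j + 2)
  symm := by
    constructor
    rintro i j ⟨h1, h2⟩
    exact ⟨h1.symm, by tauto⟩
  loopless := by
    constructor
    rintro i ⟨h, -⟩
    exact h rfl

/-- A 2-edge-coloured complete graph (with colouring `c`) contains a monochromatic copy
of the graph `H`. -/
def HasMonoCopy {W V : Type*} (H : SimpleGraph W) (c : Sym2 V → Bool) : Prop :=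
  ∃ (b : Bool) (f : W ↪ V), ∀ u v : W, H.Adj u v → c s(f u, f v) = b

/-- The subgraph of a 2-edge-coloured graph consisting of the edges of colour `b`. -/
def colourSubgraph {V : Type*} (G : SimpleGraph V) (c : Sym2 V → Bool) (b : Bool) :
    SimpleGraph V where
  Adj u v := G.Adj u v ∧ c s(u, v) = b
  symm := by
    constructor
    rintro u v ⟨h1, h2⟩
    exact ⟨h1.symm, by rwa [Sym2.eq_swap]⟩
  loopless := by
    constructor
    rintro u ⟨h, -⟩
    exact G.loopless.irrefl u h

/-- Two edges are directly triangle-connected: they share a vertex and the two remaining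
endpoints are adjacent. -/
def EdgeTriangleAdj {V : Type*} (G : SimpleGraph V) (e f : Sym2 V) : Prop :=
  ∃ u v w, G.Adj u v ∧ G.Adj u w ∧ G.Adj v w ∧ e = s(u, v) ∧ f = s(u, w)

/-- Triangle-connectedness of edges: the reflexive-transitive closure of direct
triangle-connectedness.  Two edges lie in the same triangle component iff they are
triangle-connected. -/
def TriangleConnected {V : Type*} (G : SimpleGraph V) (e f : Sym2 V) : Prop :=
  Relation.ReflTransGen (EdgeTriangleAdj G) e f

/-- `t` is (the vertex set of) a triangle of `G`. -/
def IsTriangle {V : Type*} [DecidableEq V] (G : SimpleGraph V) (t : Finset V) : Prop :=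
  ∃ u v w, G.Adj u v ∧ G.Adj u w ∧ G.Adj v w ∧ t = {u, v, w}

/-- `e` is an edge inside the vertex set `t`. -/
def EdgeOf {V : Type*} (t : Finset V) (e : Sym2 V) : Prop := ∀ x ∈ e, x ∈ t

/-- `T` is a triangle-connected triangle factor (TCTF) of `G`: a collection of pairwise
vertex-disjoint triangles of `G` all of whose edges lie in a single triangle component. -/
def IsTCTF {V : Type*} [DecidableEq V] (G : SimpleGraph V) (T : Finset (Finset V)) : Prop :=
  (∀ t ∈ T, IsTriangle G t) ∧
  ((T : Set (Finset V)).Pairwise Disjoint) ∧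
  (∀ t ∈ T, ∀ t' ∈ T, ∀ e ∈ G.edgeSet, ∀ f ∈ G.edgeSet,
    EdgeOf t e → EdgeOf t' f → TriangleConnected G e f)

/-- The 2-edge-coloured graph `(G, c)` has a monochromatic TCTF on at least `s` vertices. -/
def HasMonoTCTF {V : Type*} [DecidableEq V] (G : SimpleGraph V) (c : Sym2 V → Bool)
    (s : ℝ) : Prop :=
  ∃ (b : Bool) (T : Finset (Finset V)),
    IsTCTF (colourSubgraph G c b) T ∧ s ≤ ((T.biUnion id).card : ℝ)

/-- The degree of `v` in `G`. -/
noncomputable def gdeg {V : Type*} (G : SimpleGraph V) (v : V) : ℕ :=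
  {u | G.Adj v u}.ncard

/-- `v` is `r`-`b` to `A`: `va` is an edge of colour `b` for all but at most `r` of the
vertices `a ∈ A`. -/
def VertexRColour {V K : Type*} (G : SimpleGraph V) (c : Sym2 V → K) (b : K) (r : ℝ)
    (v : V) (A : Finset V) : Prop :=
  ({a ∈ (A : Set V) | ¬(G.Adj v a ∧ c s(v, a) = b)}.ncard : ℝ) ≤ r

/-- The pair `(A, B)` is `r`-`b`: all but at most `r` vertices of `A` are `r`-`b` to `B`
and vice versa. -/
def PairRColour {V K : Type*} (G : SimpleGraph V) (c : Sym2 V → K) (b : K) (r : ℝ)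
    (A B : Finset V) : Prop :=
  ({a ∈ (A : Set V) | ¬VertexRColour G c b r a B}.ncard : ℝ) ≤ r ∧
  ({a ∈ (B : Set V) | ¬VertexRColour G c b r a A}.ncard : ℝ) ≤ r

/-- `M` is a matching of `G` (a set of pairwise vertex-disjoint edges of `G`). -/
def IsMatching' {V : Type*} (G : SimpleGraph V) (M : Finset (Sym2 V)) : Prop :=
  (∀ e ∈ M, e ∈ G.edgeSet) ∧
  ((M : Set (Sym2 V)).Pairwise fun e f => ∀ x, x ∈ e → x ∉ f)

/-- `M` is a connected matching of `G`: a matching all of whose edges lie in the same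
connected component of `G`. -/
def IsConnMatching {V : Type*} (G : SimpleGraph V) (M : Finset (Sym2 V)) : Prop :=
  IsMatching' G M ∧ ∀ e ∈ M, ∀ f ∈ M, ∀ u v : V, u ∈ e → v ∈ f → G.Reachable u v

/-- The number of neighbours of `v` (in the graph `G`) inside `A`. -/
noncomputable def nbrCountIn {V : Type*} (G : SimpleGraph V) (v : V) (A : Finset V) : ℕ :=
  {a ∈ (A : Set V) | G.Adj v a}.ncard

/-- In a colouring of a complete graph, the number of `b`-coloured neighbours of `v`
inside `A`. -/
noncomputable def colourNbrCount {V : Type*} (c : Sym2 V → Bool) (b : Bool) (v : V)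
    (A : Finset V) : ℕ :=
  {a ∈ (A : Set V) | a ≠ v ∧ c s(v, a) = b}.ncard

/-- Every vertex of `A` has at most `r` `b`-coloured neighbours in `B` and vice versa
(for a colouring of a complete graph). -/
def PairFewColour {V : Type*} (c : Sym2 V → Bool) (b : Bool) (r : ℝ) (A B : Finset V) :
    Prop :=
  (∀ v ∈ A, (colourNbrCount c b v B : ℝ) ≤ r) ∧
  (∀ v ∈ B, (colourNbrCount c b v A : ℝ) ≤ r)

/-- The number of edges of `G` with one endpoint in `A` and the other in `B`. -/
noncomputable def edgesBetween {V : Type*} (G : SimpleGraph V) (A B : Finset V) : ℕ :=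
  {e ∈ G.edgeSet | ∃ a ∈ A, ∃ b ∈ B, e = s(a, b)}.ncard

/-- Two cliques of `G'` (each with at least two vertices) are triangle-connected in `G'`:
some edge of one is triangle-connected to some edge of the other. -/
def CliquesTC {V : Type*} (G' : SimpleGraph V) (C C' : Finset V) : Prop :=
  ∃ u v w x, u ∈ C ∧ v ∈ C ∧ w ∈ C' ∧ x ∈ C' ∧ G'.Adj u v ∧ G'.Adj w x ∧
    TriangleConnected G' s(u, v) s(w, x)

/-- The parameter `m = |log ε| / 4` of the Setting. -/
noncomputable def mval (ε : ℝ) : ℝ := |Real.log ε| / 4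

/-- A clique decomposition of the 2-edge-coloured graph `(G, c)` with parameters `ε`, `t`
(the Setting of the paper): a partition of `V(G)` into a small set `Vbin` together with a
collection `cliques` of monochromatic cliques (`col K` is the colour of the clique `K`),
each of size between `2` and `m = |log ε|/4`, with at most `9t/m` cliques, such that each
vertex of a clique of colour `b` sends at most `20t/√m` edges of colour `b` to vertices
in cliques of colour `b` not `b`-triangle-connected to its own clique, and, for every
`k ≥ 1`, at most `400kt/|log ε|^{3/2}` of the cliques have fewer than `(1 - 1/k)m`
vertices. -/
def IsCliqueDecomp {V : Type*} [Fintype V] [DecidableEq V] (G : SimpleGraph V)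
    (c : Sym2 V → Bool) (ε t : ℝ) (Vbin : Finset V) (cliques : Finset (Finset V))
    (col : Finset V → Bool) : Prop :=
  (∀ K ∈ cliques, Disjoint K Vbin) ∧
  ((cliques : Set (Finset V)).Pairwise Disjoint) ∧
  (Vbin ∪ cliques.biUnion id = Finset.univ) ∧
  ((Vbin.card : ℝ) ≤ Real.sqrt ε * t + 40 * t / Real.sqrt (mval ε)) ∧
  ((cliques.card : ℝ) ≤ 9 * t / mval ε) ∧
  (∀ K ∈ cliques, 2 ≤ K.card ∧ (K.card : ℝ) ≤ mval ε ∧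
    ∀ u ∈ K, ∀ v ∈ K, u ≠ v → G.Adj u v ∧ c s(u, v) = col K) ∧
  (∀ b : Bool, ∀ C ∈ cliques, col C = b → ∀ u ∈ C,
    ({v | ∃ C' ∈ cliques, col C' = b ∧ v ∈ C' ∧
        ¬CliquesTC (colourSubgraph G c b) C C' ∧
        (colourSubgraph G c b).Adj u v}.ncard : ℝ) ≤ 20 * t / Real.sqrt (mval ε)) ∧
  (∀ k : ℕ, 1 ≤ k →
    ({K ∈ (cliques : Set (Finset V)) | (K.card : ℝ) < (1 - 1 / (k : ℝ)) * mval ε}.ncard : ℝ)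
      ≤ 400 * k * t / Real.sqrt (|Real.log ε| ^ 3))

/-- Recolour the purple (`2`) edges of a 3-colouring by red (`true`) or blue (`false`),
producing a 2-colouring (`true` = red, `false` = blue). -/
def recolourPurple {V : Type*} (c : Sym2 V → Fin 3) (b : Bool) : Sym2 V → Bool :=
  fun e => if c e = 2 then b else decide (c e = 0)

/-!
Fix the colour `τ` of a monochromatic `P_{3n}²` and let `A₁, A₂` be the two parts of size
`2n - 1` spanning `τ`-cliques (`X₁, X₂` for blue, `Y₁, Y₂` for red). The `τ`-neighbours of `A₁`
outside `A₁` form a `τ`-independent set, so a `τ`-triangle meeting `A₁` has two vertices in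
`A₁`. Consecutive triangles of the square path share an edge, so a copy meeting `A₁` has two
vertices of `A₁` in each of its `n` disjoint triangles `{3j, 3j + 1, 3j + 2}`, which is more than
`|A₁|`; likewise for `A₂`. A copy avoiding `A₁ ∪ A₂` lives on `Z` and two `τ`-independent sets,
so each of those `n` triangles meets `Z`, and `|Z| < n`.
-/

open Finset

namespace Nat

theorem window_pairs_of_meets {P : ℕ → Prop} {m i : ℕ}
    (hP : ∀ t, t + 2 < m → (P t ∨ P (t + 1) ∨ P (t + 2)) →
      (P t ∨ P (t + 1)) ∧ (P t ∨ P (t + 2)) ∧ (P (t + 1) ∨ P (t + 2)))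
    (hi : i < m) (hPi : P i) {t : ℕ} (ht : t + 2 < m) :
    (P t ∨ P (t + 1)) ∧ (P t ∨ P (t + 2)) ∧ (P (t + 1) ∨ P (t + 2)) := by
  -- consecutive windows share two positions, so one meets `P` iff the next one does
  set W : ℕ → Prop := fun t => P t ∨ P (t + 1) ∨ P (t + 2)
  have hW : ∀ t, t + 2 < m → (W t ↔ W 0) := by
    intro t ht
    induction t with
    | zero => rfl
    | succ t ih =>
      rw [← ih (by omega)]
      have h₀ := hP t (by omega)
      have h₁ := hP (t + 1) (by omega)
      simp only [W] at h₀ h₁ ⊢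
      grind
  have hWi : W (min i (m - 3)) := by
    simp only [W]
    rcases (by omega : i = min i (m - 3) ∨ i = min i (m - 3) + 1 ∨ i = min i (m - 3) + 2)
      with h | h | h <;> rw [← h] <;> simp [hPi]
  exact hP t ht ((hW t ht).2 ((hW _ (by omega)).1 hWi))

end Nat

theorem Finset.mul_le_card_of_blocks {V : Type*} [DecidableEq V] {g : ℕ → V} {S : Finset V}
    {n w k : ℕ}
    (hg : Set.InjOn g (Set.Iio (w * n)))
    (h : ∀ j < n, k ≤ #{i ∈ range (w * n) | i / w = j ∧ g i ∈ S}) : n * k ≤ #S := by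
  set T := {i ∈ range (w * n) | g i ∈ S}
  have hT : #T ≤ #S := card_le_card_of_injOn g (fun i hi => (mem_filter.1 hi).2)
    (hg.mono fun i hi => by simpa using (mem_filter.1 hi).1)
  have hblocks : #T = ∑ j ∈ range n, #{i ∈ T | i / w = j} :=
    card_eq_sum_card_fiberwise fun i hi => by
      simp only [coe_filter, coe_range, mem_range, Set.mem_Iio, Set.mem_ofPred_eq, T] at hi ⊢
      exact Nat.div_lt_of_lt_mul hi.1
  calc n * k = #(range n) • k := by simp
    _ ≤ ∑ j ∈ range n, #{i ∈ T | i / w = j} := card_nsmul_le_sum _ _ _ fun j hj => by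
        simpa only [T, filter_filter, and_comm] using h j (mem_range.1 hj)
    _ ≤ #S := hblocks ▸ hT

namespace SimpleGraph

variable {V : Type*} {G : SimpleGraph V}

theorem mem_or_mem_of_adj_of_isIndepSet {S I : Set V} (hI : G.IsIndepSet I)
    (hSI : ∀ x ∈ S, ∀ y ∉ S, G.Adj x y → y ∈ I) {x y w : V}
    (hxy : G.Adj x y) (hxw : G.Adj x w) (hyw : G.Adj y w) (hx : x ∈ S) : y ∈ S ∨ w ∈ S := by
  by_contra! h
  exact hI (hSI x hx y h.1 hxy) (hSI x hx w h.2 hxw) hyw.ne hyw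

theorem not_adj_of_mem_union_isIndepSet {I J : Set V} (hI : G.IsIndepSet I)
    (hJ : G.IsIndepSet J) {x y w : V} (hx : x ∈ I ∪ J) (hy : y ∈ I ∪ J) (hw : w ∈ I ∪ J)
    (hxy : G.Adj x y) (hxw : G.Adj x w) : ¬G.Adj y w := by
  intro hyw
  rcases hx with hx | hx <;> rcases hy with hy | hy <;> rcases hw with hw | hw
  all_goals first
    | exact hI hx hy hxy.ne hxy | exact hI hx hw hxw.ne hxw | exact hI hy hw hyw.ne hyw
    | exact hJ hx hy hxy.ne hxy | exact hJ hx hw hxw.ne hxw | exact hJ hy hw hyw.ne hyw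

def IsSquarePath (G : SimpleGraph V) (m : ℕ) (g : ℕ → V) : Prop :=
  Set.InjOn g (Set.Iio m) ∧ ∀ i j, i < j → j ≤ i + 2 → j < m → G.Adj (g i) (g j)

namespace IsSquarePath

variable [DecidableEq V] {n : ℕ} {g : ℕ → V}

theorem le_card_of_forall_window (hg : G.IsSquarePath (3 * n) g) {S : Finset V}
    (hS : ∀ t, t + 2 < 3 * n → g t ∈ S ∨ g (t + 1) ∈ S ∨ g (t + 2) ∈ S) : n ≤ #S := by
  simpa using Finset.mul_le_card_of_blocks (k := 1) hg.1 fun j hj => by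
    rw [Nat.one_le_iff_ne_zero, Ne, card_eq_zero, filter_eq_empty_iff]
    intro h
    rcases hS (3 * j) (by omega) with h' | h' | h' <;>
      exact h (mem_range.2 (by omega)) ⟨by omega, h'⟩

theorem mul_two_le_card (hg : G.IsSquarePath (3 * n) g) {S : Finset V} {I : Set V}
    (hI : G.IsIndepSet I) (hSI : ∀ x ∈ S, ∀ y ∉ S, G.Adj x y → y ∈ I)
    {i : ℕ} (hi : i < 3 * n) (hgi : g i ∈ S) : n * 2 ≤ #S := by
  have hadj : ∀ t, t + 2 < 3 * n → ∀ p q, t ≤ p → p < q → q ≤ t + 2 → G.Adj (g p) (g q) :=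
    fun t ht p q htp hpq hqt => hg.2 p q hpq (by omega) (by omega)
  have hpairs : ∀ t, t + 2 < 3 * n → (g t ∈ S ∨ g (t + 1) ∈ S ∨ g (t + 2) ∈ S) →
      (g t ∈ S ∨ g (t + 1) ∈ S) ∧ (g t ∈ S ∨ g (t + 2) ∈ S) ∧
        (g (t + 1) ∈ S ∨ g (t + 2) ∈ S) := by
    intro t ht hmeet
    have h01 := hadj t ht t (t + 1) le_rfl (by omega) (by omega)
    have h02 := hadj t ht t (t + 2) le_rfl (by omega) le_rfl
    have h12 := hadj t ht (t + 1) (t + 2) (by omega) (by omega) le_rfl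
    have tri {x y w : V} : G.Adj x y → G.Adj x w → G.Adj y w → x ∈ S → y ∈ S ∨ w ∈ S :=
      mem_or_mem_of_adj_of_isIndepSet (S := ↑S) hI hSI
    rcases hmeet with h | h | h
    · have := tri h01 h02 h12 h
      tauto
    · have := tri h01.symm h12 h02 h
      tauto
    · have := tri h02.symm h12.symm h01 h
      tauto
  refine Finset.mul_le_card_of_blocks hg.1 fun j hj => ?_
  have hmem : ∀ p, 3 * j ≤ p → p ≤ 3 * j + 2 → g p ∈ S →
      p ∈ ({i ∈ range (3 * n) | i / 3 = j ∧ g i ∈ S} : Finset ℕ) := fun p h₁ h₂ hp =>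
    mem_filter.2 ⟨mem_range.2 (by omega), by omega, hp⟩
  obtain ⟨h01, h02, h12⟩ := Nat.window_pairs_of_meets hpairs hi hgi (t := 3 * j) (by omega)
  refine one_lt_card.2 ?_
  by_cases h0 : g (3 * j) ∈ S
  · rcases h12 with h | h
    · exact ⟨_, hmem _ le_rfl (by omega) h0, _, hmem _ (by omega) (by omega) h, by omega⟩
    · exact ⟨_, hmem _ le_rfl (by omega) h0, _, hmem _ (by omega) le_rfl h, by omega⟩
  · exact ⟨_, hmem _ (by omega) (by omega) (h01.resolve_left h0),
      _, hmem _ (by omega) le_rfl (h02.resolve_left h0), by omega⟩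

end IsSquarePath

theorem not_isSquarePath_of_cover [DecidableEq V] {A₁ A₂ Q : Finset V} {I₁ I₂ : Set V} {n : ℕ}
    (hI₁ : G.IsIndepSet I₁) (hI₂ : G.IsIndepSet I₂)
    (hA₁ : ∀ x ∈ A₁, ∀ y ∉ A₁, G.Adj x y → y ∈ I₁)
    (hA₂ : ∀ x ∈ A₂, ∀ y ∉ A₂, G.Adj x y → y ∈ I₂)
    (hcover : ∀ v, v ∉ A₁ → v ∉ A₂ → v ∉ Q → v ∈ I₁ ∪ I₂)
    (hA₁card : #A₁ < 2 * n) (hA₂card : #A₂ < 2 * n) (hQcard : #Q < n) (g : ℕ → V) :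
    ¬G.IsSquarePath (3 * n) g := by
  intro hg
  by_cases h₁ : ∃ i < 3 * n, g i ∈ A₁
  · obtain ⟨i, hi, hgi⟩ := h₁
    have := hg.mul_two_le_card hI₁ hA₁ hi hgi
    omega
  by_cases h₂ : ∃ i < 3 * n, g i ∈ A₂
  · obtain ⟨i, hi, hgi⟩ := h₂
    have := hg.mul_two_le_card hI₂ hA₂ hi hgi
    omega
  push Not at h₁ h₂
  have : n ≤ #Q := hg.le_card_of_forall_window fun t ht => by
    by_contra! hQ
    have hI : ∀ p, t ≤ p → p ≤ t + 2 → g p ∉ Q → g p ∈ I₁ ∪ I₂ := fun p h h' hp =>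
      hcover _ (h₁ p (by omega)) (h₂ p (by omega)) hp
    exact not_adj_of_mem_union_isIndepSet hI₁ hI₂ (hI t le_rfl (by omega) hQ.1)
      (hI (t + 1) (by omega) (by omega) hQ.2.1) (hI (t + 2) (by omega) le_rfl hQ.2.2)
      (hg.2 _ _ (by omega) (by omega) (by omega)) (hg.2 _ _ (by omega) le_rfl ht)
      (hg.2 _ _ (by omega) (by omega) ht)
  omega

end SimpleGraph

theorem HasMonoCopy.of_copy {W W' V : Type*} {H : SimpleGraph W} {H' : SimpleGraph W'}
    {c : Sym2 V → Bool} (φ : H'.Copy H) (h : HasMonoCopy H c) : HasMonoCopy H' c :=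
  let ⟨b, f, hf⟩ := h
  ⟨b, φ.toEmbedding.trans f, fun _ _ huv => hf _ _ (φ.toHom.map_adj huv)⟩

theorem Fin.injective_natCast_zmod (m : ℕ) :
    Function.Injective fun i : Fin m => ((i : ℕ) : ZMod m) :=
  fun i j h => Fin.ext <| by
    simpa [ZMod.natCast_eq_natCast_iff', Nat.mod_eq_of_lt i.isLt, Nat.mod_eq_of_lt j.isLt] using h

def pathSqCopyCycleSq (m : ℕ) : (pathSq m).Copy (cycleSq m) where
  toHom :=
    { toFun := fun i => (i : ℕ)
      map_rel' := by
        rintro i j ⟨hij, h₁, h₂⟩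
        refine ⟨(Fin.injective_natCast_zmod m).ne hij, ?_⟩
        have : (j : ℕ) = i + 1 ∨ (j : ℕ) = i + 2 ∨ (i : ℕ) = j + 1 ∨ (i : ℕ) = j + 2 := by
          have := Fin.val_ne_of_ne hij
          omega
        rcases this with h | h | h | h <;> simp [h] }
  injective' := Fin.injective_natCast_zmod m

theorem HasMonoCopy.exists_isSquarePath {V : Type*} {c : Sym2 V → Bool} {m : ℕ}
    (h : HasMonoCopy (pathSq m) c) (hm : 0 < m) :
    ∃ τ g, (colourSubgraph ⊤ c τ).IsSquarePath m g := by
  obtain ⟨τ, f, hf⟩ := h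
  refine ⟨τ, fun i => f ⟨min i (m - 1), by omega⟩, fun i hi j hj hij => ?_,
    fun i j hij hj hjm => ?_⟩
  · have := congrArg Fin.val (f.injective hij)
    simp only [Set.mem_Iio] at hi hj this
    omega
  · have hadj : (pathSq m).Adj ⟨min i (m - 1), by omega⟩ ⟨min j (m - 1), by omega⟩ :=
      ⟨by simp only [ne_eq, Fin.mk.injEq]; omega, by simp only; omega, by simp only; omega⟩
    exact ⟨f.injective.ne hadj.1, hf _ _ hadj⟩

theorem isIndepSet_colourSubgraph_insert {V : Type*} {c : Sym2 V → Bool} {τ : Bool}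
    {B : Finset V} {z : V} (hB : ∀ u ∈ B, ∀ v ∈ B, u ≠ v → c s(u, v) = !τ)
    (hz : ∀ v ∈ B, c s(z, v) = !τ) : (colourSubgraph ⊤ c τ).IsIndepSet (insert z ↑B) := by
  have hne {e : Sym2 V} (h : c e = !τ) : c e ≠ τ := Bool.eq_not_iff.1 h
  refine Set.pairwise_insert.2 ⟨fun u hu v hv huv ⟨_, h⟩ => hne (hB u hu v hv huv) h,
    fun v hv _ => ⟨fun ⟨_, h⟩ => hne (hz v hv) h, fun ⟨_, h⟩ => ?_⟩⟩
  rw [Sym2.eq_swap] at h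
  exact hne (hz v hv) h

/-- The colour-`τ` part of the construction: for `τ` blue, `(A₁, A₂, B₁, B₂)` is
`(X₁, X₂, Y₁, Y₂)`; for `τ` red it is `(Y₁, Y₂, X₂, X₁)`; in both cases `Q = Z`. -/
structure IsObstructionPattern {V : Type*} (A₁ A₂ B₁ B₂ Q : Finset V) (z : V)
    (c : Sym2 V → Bool) (τ : Bool) : Prop where
  B₁_in : ∀ u ∈ B₁, ∀ v ∈ B₁, u ≠ v → c s(u, v) = !τ
  B₂_in : ∀ u ∈ B₂, ∀ v ∈ B₂, u ≠ v → c s(u, v) = !τ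
  z_B₁ : ∀ v ∈ B₁, c s(z, v) = !τ
  z_B₂ : ∀ v ∈ B₂, c s(z, v) = !τ
  A₁_A₂ : ∀ u ∈ A₁, ∀ v ∈ A₂, c s(u, v) = !τ
  A₁_Q : ∀ u ∈ A₁, ∀ v ∈ Q, c s(u, v) = !τ
  A₂_Q : ∀ u ∈ A₂, ∀ v ∈ Q, c s(u, v) = !τ
  A₁_B₂ : ∀ u ∈ A₁, ∀ v ∈ B₂, c s(u, v) = !τ
  A₂_B₁ : ∀ u ∈ A₂, ∀ v ∈ B₁, c s(u, v) = !τ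

namespace IsObstructionPattern

variable {V : Type*} {A₁ A₂ B₁ B₂ Q : Finset V} {z : V} {c : Sym2 V → Bool} {τ : Bool}

theorem not_isSquarePath [DecidableEq V] (hP : IsObstructionPattern A₁ A₂ B₁ B₂ Q z c τ)
    (hcover : ∀ v, v ∈ A₁ ∨ v ∈ A₂ ∨ v ∈ B₁ ∨ v ∈ B₂ ∨ v ∈ Q ∨ v = z) {n : ℕ}
    (hA₁ : #A₁ < 2 * n) (hA₂ : #A₂ < 2 * n) (hQ : #Q < n) (g : ℕ → V) :
    ¬(colourSubgraph ⊤ c τ).IsSquarePath (3 * n) g := by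
  have hne {e : Sym2 V} (h : c e = !τ) : c e ≠ τ := Bool.eq_not_iff.1 h
  refine SimpleGraph.not_isSquarePath_of_cover
    (isIndepSet_colourSubgraph_insert hP.B₁_in hP.z_B₁)
    (isIndepSet_colourSubgraph_insert hP.B₂_in hP.z_B₂) ?_ ?_ ?_ hA₁ hA₂ hQ g
  · rintro x hx y hy ⟨-, hc⟩
    rcases hcover y with h | h | h | h | h | rfl
    · exact absurd h hy
    · exact absurd hc (hne (hP.A₁_A₂ x hx y h))
    · exact Set.mem_insert_of_mem _ h
    · exact absurd hc (hne (hP.A₁_B₂ x hx y h))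
    · exact absurd hc (hne (hP.A₁_Q x hx y h))
    · exact Set.mem_insert _ _
  · rintro x hx y hy ⟨-, hc⟩
    rcases hcover y with h | h | h | h | h | rfl
    · rw [Sym2.eq_swap] at hc
      exact absurd hc (hne (hP.A₁_A₂ y h x hx))
    · exact absurd h hy
    · exact absurd hc (hne (hP.A₂_B₁ x hx y h))
    · exact Set.mem_insert_of_mem _ h
    · exact absurd hc (hne (hP.A₂_Q x hx y h))
    · exact Set.mem_insert _ _
  · intro v h₁ h₂ hq
    simp only [Set.mem_union, Set.mem_insert_iff, Finset.mem_coe]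
    have := hcover v
    tauto

end IsObstructionPattern

theorem lower_bound_construction_P3n_general (n : ℕ) (hn : 2 ≤ n)
    (X1 X2 Y1 Y2 Z : Finset (Fin (9 * n - 4))) (z : Fin (9 * n - 4))
    (hcover : X1 ∪ X2 ∪ Y1 ∪ Y2 ∪ Z ∪ {z} = Finset.univ)
    (hX1 : X1.card = 2 * n - 1) (hX2 : X2.card = 2 * n - 1)
    (hY1 : Y1.card = 2 * n - 1) (hY2 : Y2.card = 2 * n - 1)
    (hZ : Z.card = n - 1)
    (c : Sym2 (Fin (9 * n - 4)) → Bool)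
    (hX1in : ∀ u ∈ X1, ∀ v ∈ X1, u ≠ v → c s(u, v) = false)
    (hX2in : ∀ u ∈ X2, ∀ v ∈ X2, u ≠ v → c s(u, v) = false)
    (hY1in : ∀ u ∈ Y1, ∀ v ∈ Y1, u ≠ v → c s(u, v) = true)
    (hY2in : ∀ u ∈ Y2, ∀ v ∈ Y2, u ≠ v → c s(u, v) = true)
    (hX1X2 : ∀ u ∈ X1, ∀ v ∈ X2, c s(u, v) = true)
    (hX1Z : ∀ u ∈ X1, ∀ v ∈ Z, c s(u, v) = true)
    (hX2Z : ∀ u ∈ X2, ∀ v ∈ Z, c s(u, v) = true)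
    (hX1Y2 : ∀ u ∈ X1, ∀ v ∈ Y2, c s(u, v) = true)
    (hX2Y1 : ∀ u ∈ X2, ∀ v ∈ Y1, c s(u, v) = true)
    (hY1Y2 : ∀ u ∈ Y1, ∀ v ∈ Y2, c s(u, v) = false)
    (hY1Z : ∀ u ∈ Y1, ∀ v ∈ Z, c s(u, v) = false)
    (hY2Z : ∀ u ∈ Y2, ∀ v ∈ Z, c s(u, v) = false)
    (hX1Y1 : ∀ u ∈ X1, ∀ v ∈ Y1, c s(u, v) = false)
    (hX2Y2 : ∀ u ∈ X2, ∀ v ∈ Y2, c s(u, v) = false)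
    (hzX : ∀ v ∈ X1 ∪ X2, c s(z, v) = false)
    (hzY : ∀ v ∈ Y1 ∪ Y2, c s(z, v) = true) :
    ¬HasMonoCopy (pathSq (3 * n)) c ∧ ¬HasMonoCopy (cycleSq (3 * n)) c := by
  have hmem (v : Fin (9 * n - 4)) : v ∈ X1 ∨ v ∈ X2 ∨ v ∈ Y1 ∨ v ∈ Y2 ∨ v ∈ Z ∨ v = z := by
    have hv : v ∈ X1 ∪ X2 ∪ Y1 ∪ Y2 ∪ Z ∪ {z} := hcover ▸ Finset.mem_univ v
    simpa only [mem_union, mem_singleton, or_assoc] using hv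
  have hpath : ¬HasMonoCopy (pathSq (3 * n)) c := fun h => by
    obtain ⟨τ, g, hg⟩ := h.exists_isSquarePath (by omega)
    cases τ
    · refine IsObstructionPattern.not_isSquarePath (A₁ := X1) (A₂ := X2) (B₁ := Y1) (B₂ := Y2)
        ⟨hY1in, hY2in, fun v hv => hzY v (mem_union_left _ hv),
          fun v hv => hzY v (mem_union_right _ hv), hX1X2, hX1Z, hX2Z, hX1Y2, hX2Y1⟩
        (fun v => by have := hmem v; tauto) (by omega) (by omega) (by omega) g hg
    · refine IsObstructionPattern.not_isSquarePath (A₁ := Y1) (A₂ := Y2) (B₁ := X2) (B₂ := X1)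
        ⟨hX2in, hX1in, fun v hv => hzX v (mem_union_right _ hv),
          fun v hv => hzX v (mem_union_left _ hv), hY1Y2, hY1Z, hY2Z,
          fun u hu v hv => Sym2.eq_swap ▸ hX1Y1 v hv u hu,
          fun u hu v hv => Sym2.eq_swap ▸ hX2Y2 v hv u hu⟩
        (fun v => by have := hmem v; tauto) (by omega) (by omega) (by omega) g hg
  exact ⟨hpath, fun h => hpath (h.of_copy (pathSqCopyCycleSq _))⟩

/-- For every `n ≥ 2`, the explicit red/blue colouring of the complete graph
on `9n - 4` vertices described in the paper (with `|X₁| = |X₂| = |Y₁| = |Y₂| = 2n - 1`,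
`|Z| = n - 1`, one extra vertex `z`, and the edges inside `Z ∪ {z}` coloured arbitrarily)
contains no monochromatic copy of `P_{3n}²`, and hence none of `C_{3n}²`.
Colours: `true` = red, `false` = blue. -/
theorem lower_bound_construction_P3n (n : ℕ) (hn : 2 ≤ n)
    (X1 X2 Y1 Y2 Z : Finset (Fin (9 * n - 4))) (z : Fin (9 * n - 4))
    (hdisj : ([X1, X2, Y1, Y2, Z, {z}] : List (Finset (Fin (9 * n - 4)))).Pairwise Disjoint)
    (hcover : X1 ∪ X2 ∪ Y1 ∪ Y2 ∪ Z ∪ {z} = Finset.univ)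
    (hX1 : X1.card = 2 * n - 1) (hX2 : X2.card = 2 * n - 1)
    (hY1 : Y1.card = 2 * n - 1) (hY2 : Y2.card = 2 * n - 1)
    (hZ : Z.card = n - 1)
    (c : Sym2 (Fin (9 * n - 4)) → Bool)
    (hX1in : ∀ u ∈ X1, ∀ v ∈ X1, u ≠ v → c s(u, v) = false)
    (hX2in : ∀ u ∈ X2, ∀ v ∈ X2, u ≠ v → c s(u, v) = false)
    (hY1in : ∀ u ∈ Y1, ∀ v ∈ Y1, u ≠ v → c s(u, v) = true)
    (hY2in : ∀ u ∈ Y2, ∀ v ∈ Y2, u ≠ v → c s(u, v) = true)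
    (hX1X2 : ∀ u ∈ X1, ∀ v ∈ X2, c s(u, v) = true)
    (hX1Z : ∀ u ∈ X1, ∀ v ∈ Z, c s(u, v) = true)
    (hX2Z : ∀ u ∈ X2, ∀ v ∈ Z, c s(u, v) = true)
    (hX1Y2 : ∀ u ∈ X1, ∀ v ∈ Y2, c s(u, v) = true)
    (hX2Y1 : ∀ u ∈ X2, ∀ v ∈ Y1, c s(u, v) = true)
    (hY1Y2 : ∀ u ∈ Y1, ∀ v ∈ Y2, c s(u, v) = false)
    (hY1Z : ∀ u ∈ Y1, ∀ v ∈ Z, c s(u, v) = false)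
    (hY2Z : ∀ u ∈ Y2, ∀ v ∈ Z, c s(u, v) = false)
    (hX1Y1 : ∀ u ∈ X1, ∀ v ∈ Y1, c s(u, v) = false)
    (hX2Y2 : ∀ u ∈ X2, ∀ v ∈ Y2, c s(u, v) = false)
    (hzX : ∀ v ∈ X1 ∪ X2, c s(z, v) = false)
    (hzY : ∀ v ∈ Y1 ∪ Y2, c s(z, v) = true) :
    ¬HasMonoCopy (pathSq (3 * n)) c ∧ ¬HasMonoCopy (cycleSq (3 * n)) c :=
  lower_bound_construction_P3n_general n hn X1 X2 Y1 Y2 Z z hcover hX1 hX2 hY1 hY2 hZ c hX1in hX2in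
    hY1in hY2in hX1X2 hX1Z hX2Z hX1Y2 hX2Y1 hY1Y2 hY1Z hY2Z hX1Y1 hX2Y2 hzX hzY
end

section
/- There exist ε_0 > 0 and t_0 ∈ ℝ such that the following holds for any 0 < ε < ε_0 and any t > t_0. Let G be a graph on at least 2(1+3ε)t vertices with minimum degree at least |V(G)| − εt. Then any 2-edge-colouring of the edges of G with colours red and blue contains a red matching covering at least 2(1+ε)t vertices, or a blue connected matching covering at least min{ |V(G)| − (1+2ε)t , 2|V(G)| − 4(1+2ε)t } vertices. -/
/-!
Take a maximum red matching `M`. If it is small, the set `U` of vertices it leaves uncovered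
is large and spans no red edge, so the minimum-degree condition makes `U` blue-connected with
blue minimum degree close to `|U|`. Maximality also forbids augmenting paths of length three,
so each edge of `M` has an endpoint with at most one red neighbour in `U`, hence with almost
all of `U` as blue neighbours. Hall's theorem joins `k` such endpoints to distinct vertices of
`U` by blue edges, and the rest of `U` carries a blue matching missing at most one vertex
(a maximum matching of a graph of minimum degree `(n - 1) / 2` has no augmenting path of length
three either). Taking `k = min (|M|, |U| - 2⌊εt⌋ - 1)` gives the two terms of the minimum.
-/

open Finset

section Matching

variable {V : Type*} {G : SimpleGraph V} {M M' : Finset (Sym2 V)}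

lemma IsMatching'.subset (hM : IsMatching' G M) (h : M' ⊆ M) : IsMatching' G M' :=
  ⟨fun e he => hM.1 e (h he), hM.2.mono (coe_subset.2 h)⟩

lemma IsMatching'.image_map {W : Type*} [DecidableEq W] {H : SimpleGraph W} (f : G ↪g H)
    (hM : IsMatching' G M) : IsMatching' H (M.image (Sym2.map f)) := by
  refine ⟨fun e he => ?_, fun e he e' he' hne v hve hve' => ?_⟩
  · obtain ⟨e₀, he₀, rfl⟩ := mem_image.1 he
    exact f.toHom.map_mem_edgeSet (hM.1 e₀ he₀)
  · obtain ⟨e₀, he₀, rfl⟩ := mem_image.1 (mem_coe.1 he)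
    obtain ⟨e₀', he₀', rfl⟩ := mem_image.1 (mem_coe.1 he')
    obtain ⟨x, hx, rfl⟩ := Sym2.mem_map.1 hve
    obtain ⟨x', hx', hxx'⟩ := Sym2.mem_map.1 hve'
    cases f.injective hxx'
    exact hM.2 he₀ he₀' (by rintro rfl; exact hne rfl) x hx hx'

variable [DecidableEq V]

lemma IsMatching'.union (hM : IsMatching' G M) (hM' : IsMatching' G M')
    (h : ∀ e ∈ M, ∀ f ∈ M', ∀ v ∈ e, v ∉ f) : IsMatching' G (M ∪ M') := by
  refine ⟨fun e he => (mem_union.1 he).elim (hM.1 e) (hM'.1 e), ?_⟩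
  rw [coe_union, Set.pairwise_union]
  exact ⟨hM.2, hM'.2, fun e he f hf _ => ⟨h e he f hf, fun v hvf hve => h e he f hf v hve hvf⟩⟩

lemma card_union_of_forall_notMem (h : ∀ e ∈ M, ∀ f ∈ M', ∀ v ∈ e, v ∉ f) :
    #(M ∪ M') = #M + #M' :=
  card_union_of_disjoint <| disjoint_left.2 fun e he he' =>
    h e he e he' _ e.out_fst_mem e.out_fst_mem

lemma isMatching'_image_mk {ι : Type*} [Fintype ι] {x y : ι → V} (hx : x.Injective)
    (hy : y.Injective) (hxy : ∀ i j, x i ≠ y j) (hadj : ∀ i, G.Adj (x i) (y i)) :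
    IsMatching' G (univ.image fun i => s(x i, y i)) := by
  refine ⟨by simpa using hadj, ?_⟩
  intro e he f hf hne v hve hvf
  obtain ⟨i, -, rfl⟩ := mem_image.1 (mem_coe.1 he)
  obtain ⟨j, -, rfl⟩ := mem_image.1 (mem_coe.1 hf)
  have hij : i ≠ j := by rintro rfl; exact hne rfl
  rcases Sym2.mem_iff.1 hve with rfl | rfl <;> rcases Sym2.mem_iff.1 hvf with h | h
  exacts [hij (hx h), hxy i j h, hxy j i h.symm, hij (hy h)]

lemma card_image_mk {ι : Type*} [Fintype ι] {x y : ι → V} (hy : y.Injective)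
    (hxy : ∀ i j, x i ≠ y j) : #(univ.image fun i => s(x i, y i)) = Fintype.card ι := by
  refine card_image_of_injective _ fun i j hij => ?_
  rcases Sym2.eq_iff.1 hij with ⟨-, h⟩ | ⟨h, -⟩
  exacts [hy h, absurd h (hxy i j)]

def coveredVerts (M : Finset (Sym2 V)) : Finset V := M.biUnion Sym2.toFinset

@[simp]
lemma mem_coveredVerts {v : V} : v ∈ coveredVerts M ↔ ∃ e ∈ M, v ∈ e := by
  simp [coveredVerts]

lemma mem_coveredVerts_insert {a b v : V} :
    v ∈ coveredVerts (insert s(a, b) M) ↔ v = a ∨ v = b ∨ v ∈ coveredVerts M := by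
  simp only [mem_coveredVerts, mem_insert, exists_eq_or_imp, Sym2.mem_iff, or_assoc]

lemma card_insert_mk_of_notMem_coveredVerts {a : V} (b : V) (ha : a ∉ coveredVerts M) :
    #(insert s(a, b) M) = #M + 1 :=
  card_insert_of_notMem fun h => ha (mem_coveredVerts.2 ⟨_, h, Sym2.mem_mk_left a b⟩)

lemma IsMatching'.card_coveredVerts (hM : IsMatching' G M) : #(coveredVerts M) = 2 * #M := by
  rw [coveredVerts, card_biUnion, sum_congr rfl fun e he =>
    Sym2.card_toFinset_of_not_isDiag e (G.not_isDiag_of_mem_edgeSet (hM.1 e he)),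
    sum_const, smul_eq_mul, mul_comm]
  intro e he f hf hef
  exact disjoint_left.2 fun v hve hvf =>
    hM.2 he hf hef v (Sym2.mem_toFinset.1 hve) (Sym2.mem_toFinset.1 hvf)

protected lemma IsMatching'.insert (hM : IsMatching' G M) {a b : V} (hab : G.Adj a b)
    (ha : a ∉ coveredVerts M) (hb : b ∉ coveredVerts M) : IsMatching' G (insert s(a, b) M) := by
  have hfresh : ∀ e ∈ M, ∀ v ∈ s(a, b), v ∉ e := by
    intro e he v hv hve
    rcases Sym2.mem_iff.1 hv with rfl | rfl
    exacts [ha (mem_coveredVerts.2 ⟨e, he, hve⟩), hb (mem_coveredVerts.2 ⟨e, he, hve⟩)]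
  refine ⟨?_, ?_⟩
  · simpa only [mem_insert, forall_eq_or_imp] using ⟨hab, hM.1⟩
  · rw [coe_insert]
    exact hM.2.insert fun e he _ => ⟨hfresh e he, fun v hve hv => hfresh e he v hv hve⟩

end Matching

def IsMaximumMatching' {V : Type*} (G : SimpleGraph V) (M : Finset (Sym2 V)) : Prop :=
  IsMatching' G M ∧ ∀ M', IsMatching' G M' → #M' ≤ #M

lemma exists_isMaximumMatching' {V : Type*} [Finite V] (G : SimpleGraph V) :
    ∃ M, IsMaximumMatching' G M := by
  classical
  have := Fintype.ofFinite V
  obtain ⟨M, hM, hmax⟩ :=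
    (univ.filter (IsMatching' G)).exists_max_image card ⟨∅, by simp [IsMatching']⟩
  exact ⟨M, (mem_filter.1 hM).2, fun M' hM' => hmax M' (mem_filter.2 ⟨mem_univ _, hM'⟩)⟩

namespace IsMaximumMatching'

variable {V : Type*} [DecidableEq V] {G : SimpleGraph V} {M : Finset (Sym2 V)}

lemma not_adj (hM : IsMaximumMatching' G M) {u w : V} (hu : u ∉ coveredVerts M)
    (hw : w ∉ coveredVerts M) : ¬G.Adj u w := fun huw => by
  have := hM.2 _ (hM.1.insert huw hu hw)
  rw [card_insert_mk_of_notMem_coveredVerts w hu] at this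
  omega

/-- No augmenting path of length three. -/
lemma not_adj_and_adj (hM : IsMaximumMatching' G M) {a b u w : V} (hab : s(a, b) ∈ M)
    (hu : u ∉ coveredVerts M) (hw : w ∉ coveredVerts M) (huw : u ≠ w) :
    ¬(G.Adj a u ∧ G.Adj b w) := by
  rintro ⟨hau, hbw⟩
  have hcov : ∀ v ∈ coveredVerts (M.erase s(a, b)), v ∈ coveredVerts M ∧ v ≠ a ∧ v ≠ b := by
    simp only [mem_coveredVerts, mem_erase]
    rintro v ⟨e, ⟨hne, he⟩, hve⟩
    refine ⟨⟨e, he, hve⟩, ?_, ?_⟩ <;> rintro rfl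
    exacts [hM.1.2 he hab hne v hve (Sym2.mem_mk_left _ _),
      hM.1.2 he hab hne v hve (Sym2.mem_mk_right _ _)]
  have ha : a ∉ coveredVerts (M.erase s(a, b)) := fun h => (hcov a h).2.1 rfl
  have hu' : u ∉ coveredVerts (M.erase s(a, b)) := fun h => hu (hcov u h).1
  have hb : b ∉ coveredVerts (insert s(a, u) (M.erase s(a, b))) := by
    have hbu : b ≠ u := by
      rintro rfl
      exact hu (mem_coveredVerts.2 ⟨_, hab, Sym2.mem_mk_right _ _⟩)
    rw [mem_coveredVerts_insert]
    rintro (h | h | h)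
    exacts [G.ne_of_adj (hM.1.1 _ hab) h.symm, hbu h, (hcov b h).2.2 rfl]
  have hw' : w ∉ coveredVerts (insert s(a, u) (M.erase s(a, b))) := by
    rw [mem_coveredVerts_insert]
    rintro (rfl | rfl | h)
    exacts [hw (mem_coveredVerts.2 ⟨_, hab, Sym2.mem_mk_left _ _⟩), huw rfl, hw (hcov w h).1]
  have := hM.2 _ (((hM.1.subset (erase_subset _ _)).insert hau ha hu').insert hbw hb hw')
  rw [card_insert_mk_of_notMem_coveredVerts w hb, card_insert_mk_of_notMem_coveredVerts u ha,
    card_erase_of_mem hab] at this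
  have := card_pos.2 ⟨_, hab⟩
  omega

variable [Fintype V] [DecidableRel G.Adj]

lemma card_neighborFinset_inter_add_le_two (hM : IsMaximumMatching' G M) {e : Sym2 V}
    (he : e ∈ M) {u w : V} (hu : u ∉ coveredVerts M) (hw : w ∉ coveredVerts M) (huw : u ≠ w) :
    #(G.neighborFinset u ∩ e.toFinset) + #(G.neighborFinset w ∩ e.toFinset) ≤ 2 := by
  induction e using Sym2.ind with
  | _ a b =>
  have hab : a ≠ b := G.ne_of_adj (hM.1.1 _ he)
  have h₁ := hM.not_adj_and_adj he hu hw huw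
  have h₂ := hM.not_adj_and_adj (Sym2.eq_swap ▸ he) hu hw huw
  simp only [Sym2.toFinset_mk_eq, inter_comm _ {a, b}, ← filter_mem_eq_inter,
    SimpleGraph.mem_neighborFinset, filter_insert, filter_singleton]
  split_ifs <;> simp_all [G.adj_comm]

lemma degree_add_degree_le (hM : IsMaximumMatching' G M) {u w : V} (hu : u ∉ coveredVerts M)
    (hw : w ∉ coveredVerts M) (huw : u ≠ w) : G.degree u + G.degree w ≤ 2 * #M := by
  have hsplit : ∀ x ∉ coveredVerts M,
      G.degree x ≤ ∑ e ∈ M, #(G.neighborFinset x ∩ e.toFinset) := fun x hx => by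
    refine (card_le_card fun v hv => ?_).trans card_biUnion_le
    obtain ⟨e, he, hve⟩ := mem_coveredVerts.1 <|
      not_not.1 fun hv' => hM.not_adj hx hv' ((G.mem_neighborFinset _ _).1 hv)
    exact mem_biUnion.2 ⟨e, he, mem_inter.2 ⟨hv, Sym2.mem_toFinset.2 hve⟩⟩
  calc G.degree u + G.degree w
      ≤ ∑ e ∈ M, (#(G.neighborFinset u ∩ e.toFinset) + #(G.neighborFinset w ∩ e.toFinset)) := by
        rw [sum_add_distrib]; exact add_le_add (hsplit u hu) (hsplit w hw)
    _ ≤ ∑ _e ∈ M, 2 := sum_le_sum fun e he =>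
        hM.card_neighborFinset_inter_add_le_two he hu hw huw
    _ = 2 * #M := by rw [sum_const, smul_eq_mul, mul_comm]

lemma exists_mem_card_filter_adj_le_one (hM : IsMaximumMatching' G M) {e : Sym2 V}
    (he : e ∈ M) : ∃ x ∈ e, #((coveredVerts M)ᶜ.filter (G.Adj x)) ≤ 1 := by
  induction e using Sym2.ind with
  | _ a b =>
  by_contra! h
  obtain ⟨u, hu⟩ := card_pos.1 ((h a (Sym2.mem_mk_left a b)).trans' zero_lt_one)
  obtain ⟨w, hw, hwu⟩ := exists_mem_ne (h b (Sym2.mem_mk_right a b)) u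
  rw [mem_filter, mem_compl] at hu hw
  exact hM.not_adj_and_adj he hu.1 hw.1 hwu.symm ⟨hu.2, hw.2⟩

lemma exists_card_eq_forall_card_filter_adj_le_one (hM : IsMaximumMatching' G M) :
    ∃ X ⊆ coveredVerts M, #X = #M ∧ ∀ x ∈ X, #((coveredVerts M)ᶜ.filter (G.Adj x)) ≤ 1 := by
  choose g hg hgdeg using fun e : M => hM.exists_mem_card_filter_adj_le_one e.2
  have hginj : g.Injective := fun e f hef => Subtype.ext <| not_not.1 fun hne =>
    hM.1.2 e.2 f.2 hne _ (hg e) (hef ▸ hg f)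
  refine ⟨univ.image g, fun x hx => ?_, ?_, fun x hx => ?_⟩
  · obtain ⟨e, -, rfl⟩ := mem_image.1 hx
    exact mem_coveredVerts.2 ⟨e, e.2, hg e⟩
  · rw [card_image_of_injective _ hginj, card_univ, Fintype.card_coe]
  · obtain ⟨e, -, rfl⟩ := mem_image.1 hx
    exact hgdeg e

end IsMaximumMatching'

lemma degree_induce_eq_card_filter {V : Type*} [Fintype V] [DecidableEq V] (G : SimpleGraph V)
    [DecidableRel G.Adj] (W : Finset V) (v : (W : Set V)) :
    (G.induce (W : Set V)).degree v = #(W.filter (G.Adj v)) := by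
  rw [← SimpleGraph.card_neighborFinset_eq_degree, ← card_map (.subtype (· ∈ (W : Set V)))]
  congr 1
  ext u
  simp [and_comm]

section NearPerfect

variable {V : Type*} [Fintype V] [DecidableEq V] {G : SimpleGraph V} [DecidableRel G.Adj]

theorem exists_isMatching'_card_le_of_le_degree {D : ℕ} (hdeg : ∀ v, D ≤ G.degree v)
    (hcard : Fintype.card V ≤ 2 * D + 1) :
    ∃ M, IsMatching' G M ∧ Fintype.card V ≤ 2 * #M + 1 := by
  obtain ⟨M, hM⟩ := exists_isMaximumMatching' G
  refine ⟨M, hM.1, not_lt.1 fun hlt => ?_⟩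
  have h2 : 1 < #(coveredVerts M)ᶜ := by rw [card_compl, hM.1.card_coveredVerts]; omega
  obtain ⟨u, hu, w, hw, huw⟩ := one_lt_card.1 h2
  rw [mem_compl] at hu hw
  have := hM.degree_add_degree_le hu hw huw
  have := hdeg u
  have := hdeg w
  omega

theorem exists_isMatching'_card_le_of_le_card_filter_adj (W : Finset V) {D : ℕ}
    (hdeg : ∀ v ∈ W, D ≤ #(W.filter (G.Adj v))) (hcard : #W ≤ 2 * D + 1) :
    ∃ M, IsMatching' G M ∧ (∀ e ∈ M, ∀ v ∈ e, v ∈ W) ∧ #W ≤ 2 * #M + 1 := by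
  classical
  obtain ⟨M, hM, hMcard⟩ := exists_isMatching'_card_le_of_le_degree
    (G := G.induce (W : Set V)) (D := D)
    (fun v => (degree_induce_eq_card_filter G W v).symm ▸ hdeg v v.2)
    (by simpa using hcard)
  refine ⟨M.image (Sym2.map (↑)), hM.image_map (SimpleGraph.Embedding.induce _), ?_, ?_⟩
  · intro e he v hv
    obtain ⟨e, -, rfl⟩ := mem_image.1 he
    obtain ⟨v, -, rfl⟩ := Sym2.mem_map.1 hv
    exact v.2
  · rwa [card_image_of_injective _ (Sym2.map.injective Subtype.val_injective),
      ← Fintype.card_coe W]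

end NearPerfect

lemma exists_injective_forall_mem_of_card_le {ι α : Type*} [Fintype ι] [DecidableEq α]
    (t : ι → Finset α) (h : ∀ i, Fintype.card ι ≤ #(t i)) :
    ∃ f : ι → α, f.Injective ∧ ∀ i, f i ∈ t i :=
  (all_card_le_biUnion_card_iff_exists_injective t).1 fun s => by
    rcases s.eq_empty_or_nonempty with rfl | ⟨i, hi⟩
    · simp
    · exact (card_le_univ s).trans ((h i).trans (card_le_card (subset_biUnion_of_mem t hi)))

section Connected

variable {V : Type*} [DecidableEq V] {H : SimpleGraph V}

lemma reachable_of_card_lt_card_filter_add [DecidableRel H.Adj] {A : Finset V} {u w : V}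
    (h : #A < #(A.filter (H.Adj u)) + #(A.filter (H.Adj w))) : H.Reachable u w := by
  obtain ⟨a, ha⟩ := inter_nonempty_of_card_lt_card_add_card (filter_subset _ _)
    (filter_subset _ _) h
  rw [mem_inter, mem_filter, mem_filter] at ha
  exact ha.1.2.reachable.trans ha.2.2.symm.reachable

lemma exists_isConnMatching_card_eq_add {U X : Finset V} {z : V}
    (hz : ∀ u ∈ U, H.Reachable z u) {M : Finset (Sym2 V)} (hM : IsMatching' H M)
    (hMU : ∀ e ∈ M, ∀ v ∈ e, v ∈ U) (hXU : Disjoint X U) (y : X → V) (hy : y.Injective)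
    (hyU : ∀ x, y x ∈ U) (hyM : ∀ x, ∀ e ∈ M, y x ∉ e) (hadj : ∀ x : X, H.Adj x (y x)) :
    ∃ M', IsConnMatching H M' ∧ #M' = #M + #X := by
  set E := univ.image fun x : X => s((x : V), y x)
  have hxy : ∀ x x' : X, (x : V) ≠ y x' := fun x x' h =>
    disjoint_left.1 hXU x.2 (h ▸ hyU x')
  have hdisj : ∀ e ∈ M, ∀ f ∈ E, ∀ v ∈ e, v ∉ f := by
    intro e he f hf v hve hvf
    obtain ⟨x, -, rfl⟩ := mem_image.1 hf
    rcases Sym2.mem_iff.1 hvf with rfl | rfl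
    exacts [disjoint_left.1 hXU x.2 (hMU e he _ hve), hyM x e he hve]
  have hreach : ∀ e ∈ M ∪ E, ∀ v ∈ e, H.Reachable z v := by
    intro e he v hv
    rcases mem_union.1 he with he | he
    · exact hz v (hMU e he v hv)
    · obtain ⟨x, -, rfl⟩ := mem_image.1 he
      rcases Sym2.mem_iff.1 hv with rfl | rfl
      exacts [(hz _ (hyU x)).trans (hadj x).symm.reachable, hz _ (hyU x)]
  refine ⟨M ∪ E, ⟨hM.union (isMatching'_image_mk Subtype.val_injective hy hxy hadj) hdisj,
    fun e he f hf u v hu hv => (hreach e he u hu).symm.trans (hreach f hf v hv)⟩, ?_⟩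
  rw [card_union_of_forall_notMem hdisj, card_image_mk hy hxy, Fintype.card_coe]

end Connected

instance {V : Type*} {G : SimpleGraph V} [DecidableRel G.Adj] {c : Sym2 V → Bool} {b : Bool} :
    DecidableRel (colourSubgraph G c b).Adj :=
  fun u v => inferInstanceAs (Decidable (G.Adj u v ∧ c s(u, v) = b))

lemma gdeg_eq_degree {V : Type*} [Fintype V] (G : SimpleGraph V) [DecidableRel G.Adj] (v : V) :
    gdeg G v = G.degree v := by
  rw [gdeg, ← G.card_neighborSet_eq_degree, ← Nat.card_eq_fintype_card, Nat.card_coe_set_eq]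
  rfl

section Degree

variable {V : Type*} [Fintype V] {G : SimpleGraph V} [DecidableRel G.Adj] {r : ℝ}

lemma one_le_of_card_sub_le_degree (h : ∀ v, (Fintype.card V : ℝ) - r ≤ G.degree v) (v : V) :
    1 ≤ r := by
  have : (G.degree v : ℝ) + 1 ≤ Fintype.card V := by exact_mod_cast G.degree_lt_card_verts v
  linarith [h v]

lemma card_le_degree_add_floor (h : ∀ v, (Fintype.card V : ℝ) - r ≤ G.degree v) (v : V) :
    Fintype.card V ≤ G.degree v + ⌊r⌋₊ := by
  have := Nat.le_floor (n := Fintype.card V - G.degree v) (a := r) <| by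
    rw [Nat.cast_sub (G.degree_lt_card_verts v).le]
    linarith [h v]
  omega

end Degree

section Colour

variable {V : Type*} [Fintype V] [DecidableEq V] {G : SimpleGraph V} [DecidableRel G.Adj]

lemma card_le_card_filter_adj_add {d : ℕ} {v : V} (hv : Fintype.card V ≤ G.degree v + d)
    (A : Finset V) : #A ≤ #(A.filter (G.Adj v)) + d := by
  have hnon : #(A.filter fun u => ¬G.Adj v u) ≤ #(G.neighborFinset v)ᶜ :=
    card_le_card fun u hu => by simpa using (mem_filter.1 hu).2
  rw [card_compl, G.card_neighborFinset_eq_degree] at hnon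
  have := card_filter_add_card_filter_not (s := A) (G.Adj v)
  omega

lemma card_le_card_filter_colourSubgraph_adj_add {c : Sym2 V → Bool} {d : ℕ} {v : V}
    (hv : Fintype.card V ≤ G.degree v + d) (A : Finset V) :
    #A ≤ #(A.filter ((colourSubgraph G c false).Adj v)) +
      #(A.filter ((colourSubgraph G c true).Adj v)) + d := by
  have hsplit : A.filter (G.Adj v) ⊆
      A.filter ((colourSubgraph G c false).Adj v) ∪ A.filter ((colourSubgraph G c true).Adj v) := by
    intro u hu
    rw [mem_filter] at hu
    rw [mem_union, mem_filter, mem_filter]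
    cases hc : c s(v, u)
    exacts [Or.inl ⟨hu.1, hu.2, hc⟩, Or.inr ⟨hu.1, hu.2, hc⟩]
  have := (card_le_card hsplit).trans (card_union_le _ _)
  have := card_le_card_filter_adj_add hv A
  omega

variable {c : Sym2 V → Bool} {d : ℕ} {M : Finset (Sym2 V)}

lemma exists_blue_partners (hdeg : ∀ v, Fintype.card V ≤ G.degree v + d)
    (hM : IsMaximumMatching' (colourSubgraph G c true) M) {k : ℕ} (hk : k ≤ #M)
    (hkU : k + d + 1 ≤ #(coveredVerts M)ᶜ) :
    ∃ X ⊆ coveredVerts M, #X = k ∧ ∃ y : X → V, y.Injective ∧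
      ∀ x, y x ∈ (coveredVerts M)ᶜ ∧ (colourSubgraph G c false).Adj x (y x) := by
  obtain ⟨X₀, hX₀M, hX₀card, hX₀red⟩ := hM.exists_card_eq_forall_card_filter_adj_le_one
  obtain ⟨X, hXX₀, hXcard⟩ := exists_subset_card_eq (hX₀card ▸ hk)
  refine ⟨X, hXX₀.trans hX₀M, hXcard, ?_⟩
  obtain ⟨y, hy, hyU⟩ := exists_injective_forall_mem_of_card_le
    (fun x : X => (coveredVerts M)ᶜ.filter ((colourSubgraph G c false).Adj x)) fun x => by
      have := card_le_card_filter_colourSubgraph_adj_add (c := c) (hdeg x) (coveredVerts M)ᶜ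
      have := hX₀red x (hXX₀ x.2)
      rw [Fintype.card_coe]
      omega
  exact ⟨y, hy, fun x => mem_filter.1 (hyU x)⟩

theorem exists_blue_isConnMatching_of_isMaximumMatching'
    (hdeg : ∀ v, Fintype.card V ≤ G.degree v + d)
    (hM : IsMaximumMatching' (colourSubgraph G c true) M) {k : ℕ} (hk : k ≤ #M)
    (hkn : 2 * #M + k + 2 * d + 1 ≤ Fintype.card V) :
    ∃ MB, IsConnMatching (colourSubgraph G c false) MB ∧
      Fintype.card V + k ≤ 2 * #M + 2 * #MB + 1 := by
  set U := (coveredVerts M)ᶜ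
  have hU : #U + 2 * #M = Fintype.card V := by
    rw [card_compl, hM.1.card_coveredVerts]
    have := hM.1.card_coveredVerts ▸ card_le_univ (coveredVerts M)
    omega
  have hblue : ∀ v ∈ U, ∀ A ⊆ U, #A ≤ #(A.filter ((colourSubgraph G c false).Adj v)) + d := by
    intro v hv A hA
    have hred : A.filter ((colourSubgraph G c true).Adj v) = ∅ := filter_eq_empty_iff.2
      fun u hu => hM.not_adj (mem_compl.1 hv) (mem_compl.1 (hA hu))
    simpa [hred] using card_le_card_filter_colourSubgraph_adj_add (c := c) (hdeg v) A
  obtain ⟨z, hz⟩ : U.Nonempty := card_pos.1 (by omega)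
  have hreach : ∀ u ∈ U, (colourSubgraph G c false).Reachable z u := fun u hu =>
    reachable_of_card_lt_card_filter_add (A := U) (by
      have := hblue z hz U subset_rfl
      have := hblue u hu U subset_rfl
      omega)
  obtain ⟨X, hXM, hXcard, y, hy, hyU⟩ := exists_blue_partners hdeg hM hk
    (show k + d + 1 ≤ #U by omega)
  set U' := U \ univ.image y
  have hU' : #U' = #U - k := by
    rw [card_sdiff_of_subset, card_image_of_injective _ hy, card_univ, Fintype.card_coe, hXcard]
    intro v hv
    obtain ⟨x, -, rfl⟩ := mem_image.1 hv
    exact (hyU x).1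
  obtain ⟨M₁, hM₁, hM₁U', hM₁card⟩ := exists_isMatching'_card_le_of_le_card_filter_adj
    (G := colourSubgraph G c false) U' (D := #U' - d)
    (fun v hv => by have := hblue v (sdiff_subset hv) U' sdiff_subset; omega) (by omega)
  obtain ⟨MB, hMB, hMBcard⟩ := exists_isConnMatching_card_eq_add hreach hM₁
    (fun e he v hv => (mem_sdiff.1 (hM₁U' e he v hv)).1)
    (disjoint_compl_right.mono_left hXM) y hy (fun x => (hyU x).1)
    (fun x e he hx => (mem_sdiff.1 (hM₁U' e he _ hx)).2 (mem_image_of_mem y (mem_univ x)))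
    (fun x => (hyU x).2)
  exact ⟨MB, hMB, by omega⟩

theorem exists_blue_isConnMatching_of_isMaximumMatching'_of_card_le
    (hdeg : ∀ v, Fintype.card V ≤ G.degree v + d)
    (hM : IsMaximumMatching' (colourSubgraph G c true) M)
    (hn : 2 * #M + 2 * d + 1 ≤ Fintype.card V) :
    ∃ MB, IsConnMatching (colourSubgraph G c false) MB ∧
      (Fintype.card V ≤ #M + 2 * #MB + 1 ∨
        2 * Fintype.card V ≤ 4 * #M + 2 * #MB + 2 * d + 2) := by
  by_cases hsmall : 3 * #M + 2 * d + 1 ≤ Fintype.card V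
  · obtain ⟨MB, hMB, hcard⟩ :=
      exists_blue_isConnMatching_of_isMaximumMatching' hdeg hM le_rfl (by omega)
    exact ⟨MB, hMB, Or.inl (by omega)⟩
  · obtain ⟨MB, hMB, hcard⟩ := exists_blue_isConnMatching_of_isMaximumMatching' hdeg hM
      (k := Fintype.card V - 2 * #M - 2 * d - 1) (by omega) (by omega)
    exact ⟨MB, hMB, Or.inr (by omega)⟩

end Colour

/-- red matching or blue connected matching.
Colours: `true` = red, `false` = blue. -/
theorem red_matching_or_blue_connected_matching :
    ∃ eps0 t0 : ℝ, 0 < eps0 ∧ ∀ eps : ℝ, 0 < eps → eps < eps0 → ∀ t : ℝ, t0 < t →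
      ∀ (V : Type) [Fintype V] (G : SimpleGraph V) (c : Sym2 V → Bool),
        2 * (1 + 3 * eps) * t ≤ (Fintype.card V : ℝ) →
        (∀ v : V, (Fintype.card V : ℝ) - eps * t ≤ (gdeg G v : ℝ)) →
        (∃ M : Finset (Sym2 V), IsMatching' (colourSubgraph G c true) M ∧
          2 * (1 + eps) * t ≤ ((2 * M.card : ℕ) : ℝ)) ∨
        (∃ M : Finset (Sym2 V), IsConnMatching (colourSubgraph G c false) M ∧
          min ((Fintype.card V : ℝ) - (1 + 2 * eps) * t)
              (2 * (Fintype.card V : ℝ) - 4 * (1 + 2 * eps) * t) ≤ ((2 * M.card : ℕ) : ℝ)) := by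
  refine ⟨1, 0, one_pos, fun ε hε _ t ht V _ G c hn hdeg => ?_⟩
  classical
  have hdeg' : ∀ v, (Fintype.card V : ℝ) - ε * t ≤ G.degree v := fun v =>
    gdeg_eq_degree G v ▸ hdeg v
  obtain ⟨v₀⟩ : Nonempty V := Fintype.card_pos_iff.1 <| by
    have : (0 : ℝ) < Fintype.card V := by nlinarith
    exact_mod_cast this
  have hεt := one_le_of_card_sub_le_degree hdeg' v₀
  have hd : (⌊ε * t⌋₊ : ℝ) ≤ ε * t := Nat.floor_le (by linarith)
  obtain ⟨M, hM⟩ := exists_isMaximumMatching' (colourSubgraph G c true)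
  by_cases hred : 2 * (1 + ε) * t ≤ ((2 * #M : ℕ) : ℝ)
  · exact Or.inl ⟨M, hM.1, hred⟩
  rw [not_le] at hred
  push_cast at hred ⊢
  have hn' : 2 * #M + 2 * ⌊ε * t⌋₊ + 1 ≤ Fintype.card V := by
    have : (2 * #M + 2 * ⌊ε * t⌋₊ : ℝ) < Fintype.card V := by linarith
    exact_mod_cast this
  obtain ⟨MB, hMB, hcard | hcard⟩ := exists_blue_isConnMatching_of_isMaximumMatching'_of_card_le
    (card_le_degree_add_floor hdeg') hM hn'
  · have : (Fintype.card V : ℝ) ≤ #M + 2 * #MB + 1 := by exact_mod_cast hcard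
    exact Or.inr ⟨MB, hMB, (min_le_left _ _).trans (by linarith)⟩
  · have : (2 * Fintype.card V : ℝ) ≤ 4 * #M + 2 * #MB + 2 * ⌊ε * t⌋₊ + 2 := by
      exact_mod_cast hcard
    exact Or.inr ⟨MB, hMB, (min_le_right _ _).trans (by linarith)⟩
end

section
/- For n ∈ ℕ sufficiently large the following holds. Let G be a tripartite graph on 3n vertices with the three partition classes each of size n, and assume every vertex has at least 3n/4 neighbours in each of the two partition classes it does not belong to. Then G contains a triangle-connected triangle factor covering every vertex of G, and moreover every pair of edges of G is triangle-connected. -/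
/-!
Three vertices outside a class have at least `3 · 3n/4 - 2n = n/4 > 0` common neighbours in it.
Hence two edges `uv`, `uw` are triangle-connected via a common neighbour of `u`, `v`, `w` in a
class avoiding all three (after first moving `v` into the class of `w` if needed), and two
arbitrary edges via a common neighbour of one endpoint of each. The triangle factor comes from
Hall's theorem applied twice: once to match the first class with the second, where any two
vertices have degrees adding up to at least `3n/2 ≥ n`, and once to match the edges of that
matching with the third class, where an edge and a vertex each have at least `n/2` common
neighbours available.
-/

open Finset

theorem Finset.card_add_card_le_card_add_card_inter {α : Type*} [DecidableEq α]
    {s t u : Finset α} (hs : s ⊆ u) (ht : t ⊆ u) : #s + #t ≤ #u + #(s ∩ t) := by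
  rw [← card_union_add_card_inter]
  gcongr
  exact union_subset hs ht

theorem Fintype.card_filter_subtype {α : Type*} [Fintype α] (P Q : α → Prop) [DecidablePred P]
    [DecidablePred Q] : #{x : Subtype P | Q x} = #{a | P a ∧ Q a} := by
  rw [← Fintype.card_subtype, ← Fintype.card_subtype]
  exact Fintype.card_congr (Equiv.subtypeSubtypeEquivSubtypeInter P Q)

theorem Fintype.card_filter_comp_equiv {α β : Type*} [Fintype α] [Fintype β] (e : α ≃ β)
    (Q : β → Prop) [DecidablePred Q] : #{a | Q (e a)} = #{b | Q b} := by
  rw [← Fintype.card_subtype, ← Fintype.card_subtype]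
  exact Fintype.card_congr (e.subtypeEquiv fun _ => Iff.rfl)

theorem exists_equiv_forall_rel_of_card_le_card_filter_add_card_filter {α β : Type*}
    [Fintype α] [Fintype β] (r : α → β → Prop) [DecidableRel r]
    (hcard : Fintype.card α = Fintype.card β)
    (hdeg : ∀ a b, Fintype.card α ≤ #{b' | r a b'} + #{a' | r a' b}) :
    ∃ e : α ≃ β, ∀ a, r a (e a) := by
  classical
  obtain ⟨f, hf, hr⟩ := (Fintype.all_card_le_filter_rel_iff_exists_injective r).1 fun A => by
    obtain rfl | ⟨a, ha⟩ := A.eq_empty_or_nonempty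
    · simp
    by_cases hA : #A ≤ #{b | r a b}
    · refine hA.trans (card_le_card fun b hb => ?_)
      simp only [mem_filter, mem_univ, true_and] at hb ⊢
      exact ⟨a, ha, hb⟩
    · -- `A` is then too large to miss the neighbourhood of any `b`
      suffices h : ({b | ∃ a ∈ A, r a b} : Finset β) = univ by
        rw [h, card_univ, ← hcard]
        exact card_le_univ A
      refine eq_univ_of_forall fun b => ?_
      obtain ⟨a', ha'⟩ := inter_nonempty_of_card_lt_card_add_card (subset_univ A)
        (subset_univ {a' | r a' b}) (by have := hdeg a b; rw [card_univ]; omega)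
      simp only [mem_inter, mem_filter, mem_univ, true_and] at ha' ⊢
      exact ⟨a', ha'⟩
  exact ⟨Equiv.ofBijective f ((Fintype.bijective_iff_injective_and_card f).2 ⟨hf, hcard⟩), hr⟩

theorem TriangleConnected.of_adj {V : Type*} {G : SimpleGraph V} {u v w : V} (huv : G.Adj u v)
    (huw : G.Adj u w) (hvw : G.Adj v w) : TriangleConnected G s(u, v) s(u, w) :=
  .single ⟨u, v, w, huv, huw, hvw, rfl, rfl⟩

section CommonNeighbours

variable {V ι : Type*} {G : SimpleGraph V}

theorem triangleConnected_of_adj_of_adj (p : V → ι) (hthird : ∀ i j : ι, ∃ k, k ≠ i ∧ k ≠ j)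
    (hadj : ∀ ⦃u v⦄, G.Adj u v → p u ≠ p v)
    (hcommon : ∀ i u v w, p u ≠ i → p v ≠ i → p w ≠ i →
      ∃ a, p a = i ∧ G.Adj u a ∧ G.Adj v a ∧ G.Adj w a)
    {u v w : V} (huv : G.Adj u v) (huw : G.Adj u w) :
    TriangleConnected G s(u, v) s(u, w) := by
  have same_class : ∀ {v w}, G.Adj u v → G.Adj u w → p v = p w →
      TriangleConnected G s(u, v) s(u, w) := by
    intro v w huv huw hvw
    obtain ⟨k, hku, hkv⟩ := hthird (p u) (p v)
    obtain ⟨a, -, hua, hva, hwa⟩ :=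
      hcommon k u v w (Ne.symm hku) (Ne.symm hkv) (hvw ▸ Ne.symm hkv)
    exact (TriangleConnected.of_adj huv hua hva).trans
      (TriangleConnected.of_adj hua huw hwa.symm)
  by_cases hvw : p v = p w
  · exact same_class huv huw hvw
  · obtain ⟨a, hap, hua, hva, -⟩ := hcommon (p w) u v v (hadj huw) hvw hvw
    exact (TriangleConnected.of_adj huv hua hva).trans (same_class hua huw hap)

theorem triangleConnected_of_mem_edgeSet (p : V → ι) (hthird : ∀ i j : ι, ∃ k, k ≠ i ∧ k ≠ j)
    (hadj : ∀ ⦃u v⦄, G.Adj u v → p u ≠ p v)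
    (hcommon : ∀ i u v w, p u ≠ i → p v ≠ i → p w ≠ i →
      ∃ a, p a = i ∧ G.Adj u a ∧ G.Adj v a ∧ G.Adj w a)
    {e f : Sym2 V} (he : e ∈ G.edgeSet) (hf : f ∈ G.edgeSet) : TriangleConnected G e f := by
  induction e using Sym2.ind with | _ u v =>
  induction f using Sym2.ind with | _ w x =>
  obtain ⟨k, hku, hkw⟩ := hthird (p u) (p w)
  obtain ⟨z, -, huz, hwz, -⟩ := hcommon k u w w (Ne.symm hku) (Ne.symm hkw) (Ne.symm hkw)
  have hzuw := triangleConnected_of_adj_of_adj p hthird hadj hcommon huz.symm hwz.symm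
  rw [Sym2.eq_swap, Sym2.eq_swap (a := z)] at hzuw
  exact ((triangleConnected_of_adj_of_adj p hthird hadj hcommon he huz).trans hzuw).trans
    (triangleConnected_of_adj_of_adj p hthird hadj hcommon hwz hf)

end CommonNeighbours

section Transversals

variable {V : Type*} [Fintype V] [DecidableEq V] {p : V → Fin 3}

def transversals (e₁ : {v // p v = 0} ≃ {v // p v = 1}) (e₂ : {v // p v = 0} ≃ {v // p v = 2}) :
    Finset (Finset V) :=
  univ.image fun x : {v // p v = 0} => {↑x, ↑(e₁ x), ↑(e₂ x)}

variable (e₁ : {v // p v = 0} ≃ {v // p v = 1}) (e₂ : {v // p v = 0} ≃ {v // p v = 2})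

theorem pairwise_disjoint_transversals :
    (transversals e₁ e₂ : Set (Finset V)).Pairwise Disjoint := by
  simp only [transversals, coe_image, coe_univ, Set.image_univ]
  rintro _ ⟨x, rfl⟩ _ ⟨y, rfl⟩ hxy
  refine disjoint_left.2 fun a hx hy => hxy ?_
  suffices x = y by rw [this]
  simp only [mem_insert, mem_singleton] at hx hy
  rcases hx with rfl | rfl | rfl <;> rcases hy with h | h | h
  all_goals first
    | exact Subtype.ext h
    | exact e₁.injective (Subtype.ext h)
    | exact e₂.injective (Subtype.ext h)
    | simpa [x.2, y.2, (e₁ x).2, (e₁ y).2, (e₂ x).2, (e₂ y).2] using congrArg p h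

theorem biUnion_transversals : (transversals e₁ e₂).biUnion id = univ := by
  refine eq_univ_of_forall fun a => ?_
  simp only [transversals, mem_biUnion, mem_image, mem_univ, true_and, id, exists_exists_eq_and,
    mem_insert, mem_singleton]
  have : p a = 0 ∨ p a = 1 ∨ p a = 2 := by omega
  rcases this with h | h | h
  · exact ⟨⟨a, h⟩, .inl rfl⟩
  · exact ⟨e₁.symm ⟨a, h⟩, .inr (.inl (by simp))⟩
  · exact ⟨e₂.symm ⟨a, h⟩, .inr (.inr (by simp))⟩

end Transversals

structure IsDenseTripartition {V : Type*} [Fintype V] (G : SimpleGraph V) [DecidableRel G.Adj]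
    (p : V → Fin 3) (n : ℕ) : Prop where
  card_fiber : ∀ i, #{v | p v = i} = n
  ne_of_adj : ∀ ⦃u v⦄, G.Adj u v → p u ≠ p v
  le_card_adj : ∀ v i, p v ≠ i → 3 * n ≤ 4 * #{a | p a = i ∧ G.Adj v a}

namespace IsDenseTripartition

variable {V : Type*} [Fintype V] {G : SimpleGraph V} [DecidableRel G.Adj] {p : V → Fin 3}
  {n : ℕ}

theorem card_subtype (h : IsDenseTripartition G p n) (i : Fin 3) :
    Fintype.card {v // p v = i} = n := by
  rw [Fintype.card_subtype, h.card_fiber]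

theorem le_card_filter_adj (h : IsDenseTripartition G p n) {v : V} {i : Fin 3} (hv : p v ≠ i) :
    3 * n ≤ 4 * #{a : {a // p a = i} | G.Adj v a} := by
  rw [Fintype.card_filter_subtype]
  exact h.le_card_adj v i hv

theorem le_card_filter_adj' (h : IsDenseTripartition G p n) {v : V} {i : Fin 3} (hv : p v ≠ i) :
    3 * n ≤ 4 * #{a : {a // p a = i} | G.Adj a v} := by
  simpa only [G.adj_comm _ v] using h.le_card_filter_adj hv

theorem exists_common_adj (h : IsDenseTripartition G p n) {i : Fin 3} {u v w : V}
    (hu : p u ≠ i) (hv : p v ≠ i) (hw : p w ≠ i) :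
    ∃ a, p a = i ∧ G.Adj u a ∧ G.Adj v a ∧ G.Adj w a := by
  classical
  have hn : 0 < n := by
    rw [← h.card_fiber (p u)]
    exact card_pos.2 ⟨u, by simp⟩
  let N (x : V) : Finset {a // p a = i} := {a | G.Adj x a}
  have hu' : 3 * n ≤ 4 * #(N u) := h.le_card_filter_adj hu
  have hv' : 3 * n ≤ 4 * #(N v) := h.le_card_filter_adj hv
  have hw' : 3 * n ≤ 4 * #(N w) := h.le_card_filter_adj hw
  have huv := card_add_card_le_card_add_card_inter (subset_univ (N u)) (subset_univ (N v))
  have huvw :=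
    card_add_card_le_card_add_card_inter (subset_univ (N u ∩ N v)) (subset_univ (N w))
  rw [card_univ, h.card_subtype] at huv huvw
  obtain ⟨a, ha⟩ : (N u ∩ N v ∩ N w).Nonempty := by
    rw [← card_pos]
    omega
  simp only [N, mem_inter, mem_filter, mem_univ, true_and] at ha
  exact ⟨a, a.2, ha.1.1, ha.1.2, ha.2⟩

theorem exists_equiv_adj (h : IsDenseTripartition G p n) {i j : Fin 3} (hij : i ≠ j) :
    ∃ e : {v // p v = i} ≃ {v // p v = j}, ∀ x : {v // p v = i}, G.Adj x (e x) := by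
  refine exists_equiv_forall_rel_of_card_le_card_filter_add_card_filter
    (fun (x : {v // p v = i}) (y : {v // p v = j}) => G.Adj x y)
    ((h.card_subtype _).trans (h.card_subtype _).symm) fun x y => ?_
  have hx := h.le_card_filter_adj (x.2.trans_ne hij)
  have hy := h.le_card_filter_adj' (y.2.trans_ne hij.symm)
  rw [h.card_subtype]
  omega

theorem exists_equiv_adj_adj (h : IsDenseTripartition G p n) {i j k : Fin 3} (hik : i ≠ k)
    (hjk : j ≠ k) (e : {v // p v = i} ≃ {v // p v = j}) :
    ∃ e' : {v // p v = i} ≃ {v // p v = k},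
      ∀ x : {v // p v = i}, G.Adj x (e' x) ∧ G.Adj (e x) (e' x) := by
  refine exists_equiv_forall_rel_of_card_le_card_filter_add_card_filter
    (fun (x : {v // p v = i}) (z : {v // p v = k}) => G.Adj x z ∧ G.Adj (e x) z)
    ((h.card_subtype _).trans (h.card_subtype _).symm) fun x z => ?_
  classical
  have hx := h.le_card_filter_adj (x.2.trans_ne hik)
  have hex := h.le_card_filter_adj ((e x).2.trans_ne hjk)
  have hzx := h.le_card_filter_adj' (z.2.trans_ne hik.symm)
  have hzy := h.le_card_filter_adj' (z.2.trans_ne hjk.symm)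
  rw [← Fintype.card_filter_comp_equiv e] at hzy
  have hk := card_add_card_le_card_add_card_inter
    (subset_univ {z' : {v // p v = k} | G.Adj x z'})
    (subset_univ {z' : {v // p v = k} | G.Adj (e x) z'})
  have hi := card_add_card_le_card_add_card_inter
    (subset_univ {x' : {v // p v = i} | G.Adj x' z})
    (subset_univ {x' : {v // p v = i} | G.Adj (e x') z})
  rw [card_univ, h.card_subtype, ← filter_and] at hk hi
  rw [h.card_subtype]
  omega

theorem triangleConnected (h : IsDenseTripartition G p n) {e f : Sym2 V} (he : e ∈ G.edgeSet)
    (hf : f ∈ G.edgeSet) : TriangleConnected G e f :=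
  triangleConnected_of_mem_edgeSet p (by decide) h.ne_of_adj
    (fun _ _ _ _ => h.exists_common_adj) he hf

theorem exists_triangle_factor [DecidableEq V] (h : IsDenseTripartition G p n) :
    ∃ T : Finset (Finset V), (∀ t ∈ T, IsTriangle G t) ∧ (T : Set (Finset V)).Pairwise Disjoint ∧
      T.biUnion id = univ := by
  obtain ⟨e₁, he₁⟩ := h.exists_equiv_adj (i := 0) (j := 1) (by decide)
  obtain ⟨e₂, he₂⟩ := h.exists_equiv_adj_adj (k := 2) (by decide) (by decide) e₁
  refine ⟨transversals e₁ e₂, ?_, pairwise_disjoint_transversals e₁ e₂,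
    biUnion_transversals e₁ e₂⟩
  simp only [transversals, mem_image, mem_univ, true_and, forall_exists_index,
    forall_apply_eq_imp_iff]
  exact fun x => ⟨x, e₁ x, e₂ x, he₁ x, (he₂ x).1, (he₂ x).2, rfl⟩

end IsDenseTripartition

theorem nbrCountIn_eq_card_filter {V : Type*} (G : SimpleGraph V) [DecidableRel G.Adj] (v : V)
    (A : Finset V) : nbrCountIn G v A = #{a ∈ A | G.Adj v a} := by
  rw [← Set.ncard_coe_finset, coe_filter]
  rfl

theorem exists_isDenseTripartition {V : Type*} [Fintype V] [DecidableEq V] {G : SimpleGraph V}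
    [DecidableRel G.Adj] {n : ℕ} {X Y Z : Finset V}
    (hdisj : ([X, Y, Z] : List (Finset V)).Pairwise Disjoint) (hcover : X ∪ Y ∪ Z = univ)
    (hX : #X = n) (hY : #Y = n) (hZ : #Z = n)
    (hXind : ∀ u ∈ X, ∀ v ∈ X, ¬G.Adj u v) (hYind : ∀ u ∈ Y, ∀ v ∈ Y, ¬G.Adj u v)
    (hZind : ∀ u ∈ Z, ∀ v ∈ Z, ¬G.Adj u v)
    (hXdeg : ∀ v ∈ X, (3 * n / 4 : ℝ) ≤ nbrCountIn G v Y ∧ (3 * n / 4 : ℝ) ≤ nbrCountIn G v Z)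
    (hYdeg : ∀ v ∈ Y, (3 * n / 4 : ℝ) ≤ nbrCountIn G v X ∧ (3 * n / 4 : ℝ) ≤ nbrCountIn G v Z)
    (hZdeg : ∀ v ∈ Z, (3 * n / 4 : ℝ) ≤ nbrCountIn G v X ∧ (3 * n / 4 : ℝ) ≤ nbrCountIn G v Y) :
    ∃ p : V → Fin 3, IsDenseTripartition G p n := by
  simp only [List.pairwise_cons, List.mem_cons, List.not_mem_nil, or_false, forall_eq_or_imp,
    forall_eq, List.Pairwise.nil, and_true] at hdisj
  obtain ⟨⟨hXY, hXZ⟩, hYZ, -⟩ := hdisj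
  have of_real {k : ℕ} (h : (3 * n / 4 : ℝ) ≤ k) : 3 * n ≤ 4 * k := by
    rw [div_le_iff₀ (by norm_num)] at h
    exact_mod_cast (by push_cast; linarith : ((3 * n : ℕ) : ℝ) ≤ (4 * k : ℕ))
  let P : Fin 3 → Finset V := ![X, Y, Z]
  let p : V → Fin 3 := fun v => if v ∈ X then 0 else if v ∈ Y then 1 else 2
  have hp : ∀ v i, p v = i ↔ v ∈ P i := by
    intro v i
    have hv : v ∈ X ∪ Y ∪ Z := hcover ▸ mem_univ v
    simp only [mem_union] at hv
    rcases hv with (hv | hv) | hv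
    · have := disjoint_left.1 hXY hv
      have := disjoint_left.1 hXZ hv
      fin_cases i <;> simp [p, P, *]
    · have := disjoint_right.1 hXY hv
      have := disjoint_left.1 hYZ hv
      fin_cases i <;> simp [p, P, *]
    · have := disjoint_right.1 hXZ hv
      have := disjoint_right.1 hYZ hv
      fin_cases i <;> simp [p, P, *]
  refine ⟨p, fun i => ?_, fun u v huv huv' => ?_, fun v i hvi => ?_⟩
  · rw [filter_congr fun v _ => hp v i, filter_univ_mem]
    fin_cases i <;> assumption
  · have hu := (hp u _).1 rfl
    have hv := (hp v _).1 huv'.symm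
    generalize p u = i at hu hv
    fin_cases i
    exacts [hXind u hu v hv huv, hYind u hu v hv huv, hZind u hu v hv huv]
  · rw [← filter_filter, filter_congr fun v _ => hp v i, filter_univ_mem,
      ← nbrCountIn_eq_card_filter]
    have hv := (hp v _).1 rfl
    generalize p v = j at hv hvi
    apply of_real
    fin_cases i <;> fin_cases j
    all_goals first
      | exact absurd rfl hvi
      | exact (hXdeg v hv).1 | exact (hXdeg v hv).2
      | exact (hYdeg v hv).1 | exact (hYdeg v hv).2
      | exact (hZdeg v hv).1 | exact (hZdeg v hv).2

/-- dense tripartite graphs have spanning TCTFs. -/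
theorem tripartite_TCTF :
    ∃ n0 : ℕ, ∀ n : ℕ, n0 ≤ n →
      ∀ (V : Type) [Fintype V] [DecidableEq V] (G : SimpleGraph V) (X Y Z : Finset V),
        ([X, Y, Z] : List (Finset V)).Pairwise Disjoint →
        X ∪ Y ∪ Z = Finset.univ →
        X.card = n → Y.card = n → Z.card = n →
        (∀ u ∈ X, ∀ v ∈ X, ¬G.Adj u v) →
        (∀ u ∈ Y, ∀ v ∈ Y, ¬G.Adj u v) →
        (∀ u ∈ Z, ∀ v ∈ Z, ¬G.Adj u v) →
        (∀ v ∈ X, (3 * n / 4 : ℝ) ≤ (nbrCountIn G v Y : ℝ) ∧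
                  (3 * n / 4 : ℝ) ≤ (nbrCountIn G v Z : ℝ)) →
        (∀ v ∈ Y, (3 * n / 4 : ℝ) ≤ (nbrCountIn G v X : ℝ) ∧
                  (3 * n / 4 : ℝ) ≤ (nbrCountIn G v Z : ℝ)) →
        (∀ v ∈ Z, (3 * n / 4 : ℝ) ≤ (nbrCountIn G v X : ℝ) ∧
                  (3 * n / 4 : ℝ) ≤ (nbrCountIn G v Y : ℝ)) →
        (∃ T : Finset (Finset V), IsTCTF G T ∧ T.biUnion id = Finset.univ) ∧
        (∀ e ∈ G.edgeSet, ∀ f ∈ G.edgeSet, TriangleConnected G e f) := by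
  refine ⟨0, fun n _ V _ _ G X Y Z hdisj hcover hX hY hZ hXind hYind hZind hXdeg hYdeg hZdeg => ?_⟩
  classical
  obtain ⟨p, hp⟩ :=
    exists_isDenseTripartition hdisj hcover hX hY hZ hXind hYind hZind hXdeg hYdeg hZdeg
  obtain ⟨T, htri, hdisjT, hcoverT⟩ := hp.exists_triangle_factor
  exact ⟨⟨T, ⟨htri, hdisjT, fun _ _ _ _ _ he _ hf _ _ => hp.triangleConnected he hf⟩, hcoverT⟩,
    fun _ he _ hf => hp.triangleConnected he hf⟩
end
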